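/- Let r ≥ 2 and let θ₁,…,θₙ be an admissible sequence of elementary Nielsen automorphisms of F_r with θ_i = [x_i ↦ y_i x_i]. Then for every a ∈ A^{±1}, applying the substitutions θ₁, then θ₂, …, then θₙ letter-by-letter to a (i.e., computing (θₙ ∘ ⋯ ∘ θ₁)(a) by iterated substitution) produces a word over A^{±1} that is freely reduced; that is, no free cancellation occurs at any stage. -/

import Mathlib

open scoped Classical

abbrev Letter (r : ℕ) := Fin r × Bool

def linv {r : ℕ} (a : Letter r) : Letter r := (a.1, !a.2)

/-- An elementary Nielsen automorphism `[x ↦ yx]` is parametrized by the pair `(x, y)`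
with `y ≠ x` and `y ≠ x⁻¹`. -/
def Nielsen {r : ℕ} (p : Letter r × Letter r) : Prop := p.2 ≠ p.1 ∧ p.2 ≠ linv p.1

/-- Admissibility of the ordered pair `([x ↦ yx], [x′ ↦ y′x′])`. -/
def Adm {r : ℕ} (p q : Letter r × Letter r) : Prop :=
  (q.1 = p.1 ∧ q.2 ≠ linv p.2) ∨ (q.2 = p.1 ∧ q.1 ≠ linv p.2)

/-- The derivative map of `[x ↦ yx]`: sends `x ↦ y` and fixes every other letter. -/
def Dmap {r : ℕ} (p : Letter r × Letter r) (a : Letter r) : Letter r :=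
  if a = p.1 then p.2 else a

/-- The composition `Dθₙ ∘ ⋯ ∘ Dθ₁` of derivative maps (applying `θ 0` first). -/
def DcompN (r n : ℕ) (θ : ℕ → Letter r × Letter r) (a : Letter r) : Letter r :=
  (List.range n).foldl (fun b i => Dmap (θ i) b) a

/-- Letter-by-letter substitution for `[x ↦ yx]`: replaces `x` by `yx`, `x⁻¹` by `x⁻¹y⁻¹`. -/
def subst (r : ℕ) (p : Letter r × Letter r) (w : List (Letter r)) : List (Letter r) :=
  w.flatMap (fun a =>
    if a = p.1 then [p.2, p.1]
    else if a = linv p.1 then [linv p.1, linv p.2]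
    else [a])

/-- Apply the substitutions `θ 0, θ 1, …, θ (n-1)` in order, letter by letter. -/
def iterSubst (r n : ℕ) (θ : ℕ → Letter r × Letter r) (w : List (Letter r)) : List (Letter r) :=
  (List.range n).foldl (fun w i => subst r (θ i) w) w

/-!
After the substitution `[x ↦ yx]` every `x` in the word is preceded by `y` and every `x⁻¹` is
followed by `y⁻¹`. Applying the next substitution `[x' ↦ y'x']` letter by letter to a reduced
word can only create a cancellation where the images of two adjacent letters meet, and only
when these letters are `y'⁻¹ x'` or `x'⁻¹ y'`. Admissibility (`x' = x` and `y' ≠ y⁻¹`, or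
`y' = x` and `x' ≠ y⁻¹`) is exactly what makes the invariant forbid both configurations.
-/

theorem List.IsChain.flatMap {α β : Type*} {R : α → α → Prop} {S : β → β → Prop}
    {f : α → List β} {l : List α} (hl : l.IsChain R) (hne : ∀ a, f a ≠ [])
    (hf : ∀ a, (f a).IsChain S)
    (hjoin : ∀ a b, R a b → ∀ x ∈ (f a).getLast?, ∀ y ∈ (f b).head?, S x y) :
    (l.flatMap f).IsChain S := by
  rw [List.flatMap_def, List.isChain_flatten (by simpa using fun a _ => (hne a).symm)]
  exact ⟨by simpa using fun a _ => hf a, List.isChain_map f |>.mpr (hl.imp hjoin)⟩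

@[simp]
lemma linv_linv {r : ℕ} (a : Letter r) : linv (linv a) = a := by simp [linv]

lemma linv_ne_self {r : ℕ} (a : Letter r) : linv a ≠ a := by simp [linv, Prod.ext_iff]

lemma eq_linv_comm {r : ℕ} {a b : Letter r} : a = linv b ↔ b = linv a := by
  constructor <;> rintro rfl <;> rw [linv_linv]

def substLetter {r : ℕ} (q : Letter r × Letter r) (a : Letter r) : List (Letter r) :=
  if a = q.1 then [q.2, q.1] else if a = linv q.1 then [linv q.1, linv q.2] else [a]

lemma subst_eq_flatMap {r : ℕ} (q : Letter r × Letter r) (w : List (Letter r)) :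
    subst r q w = w.flatMap (substLetter q) := rfl

lemma substLetter_ne_nil {r : ℕ} (q : Letter r × Letter r) (a : Letter r) :
    substLetter q a ≠ [] := by
  unfold substLetter; split_ifs <;> simp

lemma head?_substLetter {r : ℕ} (q : Letter r × Letter r) (a : Letter r) :
    (substLetter q a).head? = some (Dmap q a) := by
  unfold substLetter Dmap; split_ifs <;> simp_all

lemma getLast?_substLetter {r : ℕ} (q : Letter r × Letter r) (a : Letter r) :
    (substLetter q a).getLast? = some (linv (Dmap q (linv a))) := by
  unfold substLetter Dmap
  split_ifs <;> simp_all [eq_linv_comm, linv_ne_self]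

lemma Dmap_ne_fst {r : ℕ} {q : Letter r × Letter r} (hq : q.2 ≠ q.1) (a : Letter r) :
    Dmap q a ≠ q.1 := by
  unfold Dmap; split_ifs with h
  · exact hq
  · exact h

lemma eq_or_eq_of_Dmap_eq_Dmap {r : ℕ} {q : Letter r × Letter r} {a b : Letter r}
    (h : Dmap q a = Dmap q b) (hab : a ≠ b) :
    (a = q.1 ∧ b = q.2) ∨ (a = q.2 ∧ b = q.1) := by
  unfold Dmap at h; split_ifs at h with ha hb hb
  · exact absurd (ha.trans hb.symm) hab
  · exact Or.inl ⟨ha, h.symm⟩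
  · exact Or.inr ⟨h, hb⟩
  · exact absurd h hab

def AdjacentAfter {r : ℕ} (p : Letter r × Letter r) (u v : Letter r) : Prop :=
  v ≠ linv u ∧ (v = p.1 → u = p.2) ∧ (u = linv p.1 → v = linv p.2)

lemma isChain_substLetter {r : ℕ} {q : Letter r × Letter r} (hq : Nielsen q) (a : Letter r) :
    (substLetter q a).IsChain (AdjacentAfter q) := by
  have hyx : q.1 ≠ linv q.2 := fun h => hq.2 (eq_linv_comm.mp h)
  unfold substLetter
  split_ifs
  · exact List.isChain_pair.mpr ⟨hyx, fun _ => rfl, fun h => absurd h hq.2⟩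
  · refine List.isChain_pair.mpr ⟨?_, fun h => absurd h.symm hyx, fun _ => rfl⟩
    simpa using hyx.symm
  · exact List.isChain_singleton a

lemma Dmap_ne_Dmap_linv {r : ℕ} {p q : Letter r × Letter r} (hadm : Adm p q) {u v : Letter r}
    (h : AdjacentAfter p u v) : Dmap q v ≠ Dmap q (linv u) := by
  obtain ⟨hred, hx, hxinv⟩ := h
  intro heq
  rcases eq_or_eq_of_Dmap_eq_Dmap heq hred with ⟨hv, hu⟩ | ⟨hv, hu⟩ <;>
    rcases hadm with ⟨hx', hy'⟩ | ⟨hy', hx'⟩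
  · exact hy' (by rw [← hu, hx (hv.trans hx')])
  · exact hx' (hv.symm.trans (hxinv (eq_linv_comm.mp (hu.trans hy').symm)))
  · exact hy' (hv.symm.trans (hxinv (eq_linv_comm.mp (hu.trans hx').symm)))
  · exact hx' (by rw [← hu, hx (hv.trans hy')])

lemma adjacentAfter_junction {r : ℕ} {p q : Letter r × Letter r} (hq : Nielsen q)
    (hadm : Adm p q) {u v : Letter r} (h : AdjacentAfter p u v) :
    AdjacentAfter q (linv (Dmap q (linv u))) (Dmap q v) := by
  refine ⟨by simpa using Dmap_ne_Dmap_linv hadm h, fun hv => absurd hv (Dmap_ne_fst hq.1 v),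
    fun hu => absurd ?_ (Dmap_ne_fst hq.1 (linv u))⟩
  simpa using congrArg linv hu

lemma isChain_subst {r : ℕ} {p q : Letter r × Letter r} (hq : Nielsen q) (hadm : Adm p q)
    {w : List (Letter r)} (hw : w.IsChain (AdjacentAfter p)) :
    (subst r q w).IsChain (AdjacentAfter q) := by
  rw [subst_eq_flatMap]
  refine hw.flatMap (substLetter_ne_nil q) (isChain_substLetter hq) fun u v huv x hx y hy => ?_
  simp only [getLast?_substLetter, head?_substLetter, Option.mem_def, Option.some.injEq] at hx hy
  subst hx hy
  exact adjacentAfter_junction hq hadm huv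

lemma iterSubst_succ {r : ℕ} (m : ℕ) (θ : ℕ → Letter r × Letter r) (w : List (Letter r)) :
    iterSubst r (m + 1) θ w = subst r (θ m) (iterSubst r m θ w) := by
  simp [iterSubst, List.range_succ]

lemma isChain_iterSubst_singleton {r n : ℕ} {θ : ℕ → Letter r × Letter r}
    (hN : ∀ i < n, Nielsen (θ i)) (hadm : ∀ i, i + 1 < n → Adm (θ i) (θ (i + 1)))
    (a : Letter r) : ∀ m, m + 1 ≤ n → (iterSubst r (m + 1) θ [a]).IsChain (AdjacentAfter (θ m))
  | 0, h => by
    simpa [iterSubst_succ, iterSubst, subst_eq_flatMap] using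
      isChain_substLetter (hN 0 h) a
  | m + 1, h => by
    rw [iterSubst_succ]
    exact isChain_subst (hN _ h) (hadm m h) (isChain_iterSubst_singleton hN hadm a m (by omega))

theorem stmt11_general (r n : ℕ) (θ : ℕ → Letter r × Letter r)
    (hN : ∀ i < n, Nielsen (θ i))
    (hadm : ∀ i, i + 1 < n → Adm (θ i) (θ (i + 1))) :
    ∀ a : Letter r, ∀ m ≤ n,
      (iterSubst r m θ [a]).Chain' (fun u v => v ≠ linv u) := by
  rintro a (_ | m) hm
  · exact List.isChain_singleton a
  · exact (isChain_iterSubst_singleton hN hadm a m hm).imp fun _ _ h => h.1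

/-- For an admissible sequence of elementary Nielsen automorphisms, computing the image of a
letter by iterated letter-by-letter substitution produces a freely reduced word at every
stage. -/
theorem stmt11 (r n : ℕ) (hr : 2 ≤ r) (θ : ℕ → Letter r × Letter r)
    (hN : ∀ i < n, Nielsen (θ i))
    (hadm : ∀ i, i + 1 < n → Adm (θ i) (θ (i + 1))) :
    ∀ a : Letter r, ∀ m ≤ n,
      (iterSubst r m θ [a]).Chain' (fun u v => v ≠ linv u) :=
  stmt11_general r n θ hN hadm
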